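/- With f = 1_{[0,1]×[0,2]×[0,1]} and g = 1_{[1,2]×[0,2]×[1,2]} in L²([0,2]³), the iterated contraction inner product ⟨(((((f ⌢₂ f) ⌢₂ f) ⌢₁ f) ⌢₁ f) ⌢₁ f) ⌢₃ f, (((((g ⌢₂ g) ⌢₂ g) ⌢₁ g) ⌢₁ g) ⌢₁ g) ⌢₃ g⟩_{L²([0,2])} equals 32; in particular it is nonzero. -/

import Mathlib

/-! Both kernels are elementary tensors `1_I ⊗ 1_[0,2] ⊗ 1_I` of interval indicators, and a nested
contraction of two elementary tensors is again one: the paired factors integrate against each other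
over `[0,2]` and the others survive. Following the seven-fold contraction for any interval
`I ⊆ [0,2]` of length one gives `4 · 1_[0,2]`, independently of where `I` sits, so `f` and `g`
produce the same function and the inner product is `16 · |[0,2]| = 32`. -/

open MeasureTheory

noncomputable section

/-- Lebesgue measure restricted to the cube `[0,2]ⁿ`. -/
def cube (n : ℕ) : Measure (Fin n → ℝ) :=
  volume.restrict {x | ∀ i, x i ∈ Set.Icc (0:ℝ) 2}

/-- The `p`-th nested contraction of `h ∈ L²([0,2]ⁿ)` and `h' ∈ L²([0,2]ᵐ)`. -/
def contrC {n m : ℕ} (p : ℕ) (hn : p ≤ n) (hm : p ≤ m)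
    (f : (Fin n → ℝ) → ℝ) (g : (Fin m → ℝ) → ℝ)
    (t : Fin (n + m - 2*p) → ℝ) : ℝ :=
  ∫ s : Fin p → ℝ,
      f (fun i => if h1 : (i : ℕ) < n - p then t ⟨i, by omega⟩
          else s (Fin.rev ⟨(i : ℕ) - (n - p), by have := i.isLt; omega⟩))
    * g (fun i => if h1 : (i : ℕ) < p then s ⟨i, h1⟩
          else t ⟨n - p + ((i : ℕ) - p), by have := i.isLt; omega⟩)
    ∂(cube p)

open Set

theorem Fin.prod_univ_add_of_eq {M : Type*} [CommMonoid M] {N : ℕ} (a b : ℕ) (h : N = a + b)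
    (f : Fin N → M) :
    ∏ i, f i = (∏ i : Fin a, f ⟨i, by omega⟩) * ∏ i : Fin b, f ⟨a + i, by omega⟩ := by
  subst h
  exact Fin.prod_univ_add f

def tensorProd {n : ℕ} (φ : Fin n → ℝ → ℝ) (x : Fin n → ℝ) : ℝ := ∏ i, φ i (x i)

-- The factors of `h ⌢ₚ h'` that survive: the first `n - p` of `h`, then the last `m - p` of `h'`.
def contrFactors {α : Type*} {n m : ℕ} (p : ℕ) (φ : Fin n → α) (ψ : Fin m → α) :
    Fin (n + m - 2 * p) → α :=
  fun i => if h : (i : ℕ) < n - p then φ ⟨i, by omega⟩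
    else ψ ⟨p + (i - (n - p)), by have := i.isLt; omega⟩

theorem cube_eq_pi (n : ℕ) : cube n = Measure.pi fun _ => volume.restrict (Icc (0 : ℝ) 2) := by
  have : {x : Fin n → ℝ | ∀ i, x i ∈ Icc 0 2} = univ.pi fun _ => Icc 0 2 := by
    ext; exact mem_univ_pi.symm
  rw [cube, this, volume_pi, Measure.restrict_pi_pi]

theorem integral_tensorProd_cube {n : ℕ} (φ : Fin n → ℝ → ℝ) :
    ∫ x, tensorProd φ x ∂cube n = ∏ i, ∫ s in Icc 0 2, φ i s := by
  rw [cube_eq_pi]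
  exact integral_fintype_prod_eq_prod φ

theorem integral_tensorProd_mul_tensorProd_cube {n : ℕ} (φ ψ : Fin n → ℝ → ℝ) :
    ∫ x, tensorProd φ x * tensorProd ψ x ∂cube n = ∏ i, ∫ s in Icc 0 2, φ i s * ψ i s := by
  simp_rw [tensorProd, ← Finset.prod_mul_distrib]
  exact integral_tensorProd_cube fun i s => φ i s * ψ i s

theorem contrC_smul_tensorProd {n m p : ℕ} (hn : p ≤ n) (hm : p ≤ m) (c c' : ℝ)
    (φ : Fin n → ℝ → ℝ) (ψ : Fin m → ℝ → ℝ) :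
    contrC p hn hm (c • tensorProd φ) (c' • tensorProd ψ) =
      (c * c' * ∏ k : Fin p, ∫ s in Icc 0 2, φ (Fin.castLE hn k).rev s * ψ (Fin.castLE hm k) s) •
        tensorProd (contrFactors p φ ψ) := by
  funext t
  simp only [contrC, tensorProd, Pi.smul_apply, smul_eq_mul]
  rw [Fin.prod_univ_add_of_eq (N := n + m - 2 * p) (n - p) (m - p) (by omega)]
  simp_rw [Fin.prod_univ_add_of_eq (N := n) (n - p) p (by omega),
    Fin.prod_univ_add_of_eq (N := m) p (m - p) (by omega)]
  simp only [contrFactors, Fin.is_lt, ↓reduceDIte, add_lt_iff_neg_left, not_lt_zero,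
    add_tsub_cancel_left, Fin.eta]
  have hrev (s : Fin p → ℝ) : ∏ k : Fin p, φ ⟨n - p + k, by omega⟩ (s k.rev) =
      ∏ k, φ (Fin.castLE hn k).rev (s k) :=
    Fintype.prod_equiv Fin.revPerm _ _ fun k => by
      congr 1
      ext
      simp only [Fin.revPerm_apply, Fin.val_rev, Fin.val_castLE]
      omega
  simp_rw [hrev]
  rw [← integral_tensorProd_cube (fun k s => φ (Fin.castLE hn k).rev s * ψ (Fin.castLE hm k) s),
    ← integral_const_mul, ← integral_mul_const]
  congr 1
  funext s
  simp only [tensorProd, Finset.prod_mul_distrib, Fin.castLE, add_comm (n - p)]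
  ring

theorem contrFactors_comp {α β : Type*} {n m : ℕ} (p : ℕ) (F : α → β) (A : Fin n → α)
    (B : Fin m → α) : contrFactors p (F ∘ A) (F ∘ B) = F ∘ contrFactors p A B := by
  funext i
  simp only [contrFactors, Function.comp_apply]
  split_ifs <;> rfl

theorem measurableSet_contrFactors {n m : ℕ} (p : ℕ) {A : Fin n → Set ℝ}
    {B : Fin m → Set ℝ} (hA : ∀ i, MeasurableSet (A i)) (hB : ∀ j, MeasurableSet (B j))
    (i : Fin (n + m - 2 * p)) : MeasurableSet (contrFactors p A B i) := by
  unfold contrFactors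
  split_ifs
  exacts [hA _, hB _]

theorem setIntegral_indicator_one_mul_indicator_one {A B : Set ℝ} (hA : MeasurableSet A)
    (hB : MeasurableSet B) :
    ∫ s in Icc 0 2, A.indicator 1 s * B.indicator 1 s = volume.real (A ∩ B ∩ Icc 0 2) := by
  rw [← measureReal_restrict_apply (hA.inter hB), ← integral_indicator_one (hA.inter hB),
    inter_indicator_one]
  rfl

theorem contrC_smul_tensorProd_indicator {n m p : ℕ} (hn : p ≤ n) (hm : p ≤ m) (c c' : ℝ)
    {A : Fin n → Set ℝ} {B : Fin m → Set ℝ} (hA : ∀ i, MeasurableSet (A i))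
    (hB : ∀ j, MeasurableSet (B j)) :
    contrC p hn hm (c • tensorProd fun i => (A i).indicator 1)
        (c' • tensorProd fun j => (B j).indicator 1) =
      (c * c' *
          ∏ k : Fin p, volume.real (A (Fin.castLE hn k).rev ∩ B (Fin.castLE hm k) ∩ Icc 0 2)) •
        tensorProd fun i => (contrFactors p A B i).indicator 1 := by
  rw [contrC_smul_tensorProd]
  congr
  · exact funext fun k => setIntegral_indicator_one_mul_indicator_one (hA _) (hB _)
  · exact contrFactors_comp p (fun S : Set ℝ => S.indicator (1 : ℝ → ℝ)) A B

theorem contrC_chain_tensorProd_indicator {I : Set ℝ} (hI : MeasurableSet I)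
    (hIK : I ⊆ Icc 0 2) (hvol : volume.real I = 1) (h : (Fin 3 → ℝ) → ℝ)
    (hh : ∀ t, h t = (I ×ˢ Icc 0 2 ×ˢ I).indicator (fun _ => 1) (t 0, t 1, t 2)) :
    contrC 3 (by norm_num) (by norm_num)
        (contrC 1 (by norm_num) (by norm_num)
          (contrC 1 (by norm_num) (by norm_num)
            (contrC 1 (by norm_num) (by norm_num)
              (contrC 2 (by norm_num) (by norm_num)
                (contrC 2 (by norm_num) (by norm_num) h h) h) h) h) h) h =
      (4 : ℝ) • tensorProd fun _ : Fin 1 => (Icc (0 : ℝ) 2).indicator 1 := by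
  have hmeas : ∀ i : Fin 3, MeasurableSet (![I, Icc 0 2, I] i) := by
    intro i; fin_cases i <;> simp [hI]
  have hh' : h = tensorProd fun i => (![I, Icc 0 2, I] i).indicator 1 := by
    funext t
    simp only [hh, tensorProd, Fin.prod_univ_three]
    rw [mul_assoc, ← indicator_prod_one, ← indicator_prod_one]
    rfl
  rw [← one_smul ℝ h, hh']
  -- each rewrite needs measurability of the nested `contrFactors`, discharged recursively
  simp (maxDischargeDepth := 8) only [contrC_smul_tensorProd_indicator, hmeas,
    measurableSet_contrFactors, implies_true]
  -- the surviving factor is `Icc 0 2` by `rfl`; the constant is `(1·2)(1·1)(1)(1)(1)(1·2·1) = 4`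
  congr 1
  norm_num [Fin.prod_univ_succ, contrFactors, Fin.rev, inter_eq_left.2 hIK, inter_eq_right.2 hIK,
    hvol]

theorem stmt12 (f g : (Fin 3 → ℝ) → ℝ)
    (hfdef : ∀ t, f t = Set.indicator
      (Set.Icc (0:ℝ) 1 ×ˢ Set.Icc (0:ℝ) 2 ×ˢ Set.Icc (0:ℝ) 1)
      (fun _ => (1:ℝ)) (t 0, t 1, t 2))
    (hgdef : ∀ t, g t = Set.indicator
      (Set.Icc (1:ℝ) 2 ×ˢ Set.Icc (0:ℝ) 2 ×ˢ Set.Icc (1:ℝ) 2)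
      (fun _ => (1:ℝ)) (t 0, t 1, t 2)) :
    (∫ x, contrC 3 (by norm_num) (by norm_num)
          (contrC 1 (by norm_num) (by norm_num)
            (contrC 1 (by norm_num) (by norm_num)
              (contrC 1 (by norm_num) (by norm_num)
                (contrC 2 (by norm_num) (by norm_num)
                  (contrC 2 (by norm_num) (by norm_num) f f) f) f) f) f) f x
        * contrC 3 (by norm_num) (by norm_num)
          (contrC 1 (by norm_num) (by norm_num)
            (contrC 1 (by norm_num) (by norm_num)
              (contrC 1 (by norm_num) (by norm_num)
                (contrC 2 (by norm_num) (by norm_num)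
                  (contrC 2 (by norm_num) (by norm_num) g g) g) g) g) g) g x
        ∂(cube _)) = 32 := by
  rw [contrC_chain_tensorProd_indicator measurableSet_Icc (Icc_subset_Icc le_rfl one_le_two)
      (by simp) f hfdef,
    contrC_chain_tensorProd_indicator measurableSet_Icc (Icc_subset_Icc zero_le_one le_rfl)
      (by norm_num) g hgdef]
  simp only [Pi.smul_apply, smul_eq_mul, mul_mul_mul_comm, integral_const_mul,
    integral_tensorProd_mul_tensorProd_cube]
  rw [Fin.prod_univ_one, setIntegral_indicator_one_mul_indicator_one measurableSet_Icc
    measurableSet_Icc]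
  norm_num

end
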